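/- arXiv:2205.04645 — 2 statements merged into one kernel-verified Lean document; each statement's English description precedes it below -/
import Mathlib

section
/- Let H be the group presented by generators y₁, …, y₆ with relations: y_i² = 1 for all i; [y₁,y₂] = [y₁,y₃] = [y₂,y₃] = 1; [y₄,y₅] = [y₄,y₆] = [y₅,y₆] = 1; [y₁,y₄] = [y₂,y₅] = [y₃,y₆] = 1; y₁y₂y₃ = 1; and y₄y₅y₆ = 1. Then the element w = (y₁y₄)(y₂y₅)(y₃y₆) is central in H. -/
open scoped commutatorElement in
/-- Relations of the group `H_{3,2}`: six involutive generators `y 0, …, y 5`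
(`y i` for `yᵢ₊₁`), entries in the same row ({0,1,2}, {3,4,5}) or the same column
({0,3},{1,4},{2,5}) commute, and the row products are trivial. -/
def relsH32 : Set (FreeGroup (Fin 6)) :=
  {r | ∃ i : Fin 6, r = FreeGroup.of i * FreeGroup.of i} ∪
  { ⁅FreeGroup.of (0 : Fin 6), FreeGroup.of 1⁆, ⁅FreeGroup.of (0 : Fin 6), FreeGroup.of 2⁆,
    ⁅FreeGroup.of (1 : Fin 6), FreeGroup.of 2⁆, ⁅FreeGroup.of (3 : Fin 6), FreeGroup.of 4⁆,
    ⁅FreeGroup.of (3 : Fin 6), FreeGroup.of 5⁆, ⁅FreeGroup.of (4 : Fin 6), FreeGroup.of 5⁆,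
    ⁅FreeGroup.of (0 : Fin 6), FreeGroup.of 3⁆, ⁅FreeGroup.of (1 : Fin 6), FreeGroup.of 4⁆,
    ⁅FreeGroup.of (2 : Fin 6), FreeGroup.of 5⁆,
    FreeGroup.of (0 : Fin 6) * FreeGroup.of 1 * FreeGroup.of 2,
    FreeGroup.of (3 : Fin 6) * FreeGroup.of 4 * FreeGroup.of 5 }

/-- In `H_{3,2}`, the element `w = (y₁y₄)(y₂y₅)(y₃y₆)` is central. -/
theorem stmt_7 :
    ∀ g : PresentedGroup relsH32,
      g * ((PresentedGroup.of 0 * PresentedGroup.of 3) *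
            (PresentedGroup.of 1 * PresentedGroup.of 4) *
            (PresentedGroup.of 2 * PresentedGroup.of 5)) =
      ((PresentedGroup.of 0 * PresentedGroup.of 3) *
        (PresentedGroup.of 1 * PresentedGroup.of 4) *
        (PresentedGroup.of 2 * PresentedGroup.of 5)) * g := by
  intro g
  set a : PresentedGroup relsH32 := PresentedGroup.of 0 with ha_def
  set b : PresentedGroup relsH32 := PresentedGroup.of 1 with hb_def
  set c : PresentedGroup relsH32 := PresentedGroup.of 2 with hc_def
  set d : PresentedGroup relsH32 := PresentedGroup.of 3 with hd_def
  set e : PresentedGroup relsH32 := PresentedGroup.of 4 with he_def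
  set f : PresentedGroup relsH32 := PresentedGroup.of 5 with hf_def
  set W : PresentedGroup relsH32 := a * d * (b * e) * (c * f) with hW_def
  have hone : ∀ r ∈ relsH32, PresentedGroup.mk relsH32 r = 1 := fun r hr =>
    (QuotientGroup.eq_one_iff r).mpr (Subgroup.subset_normalClosure hr)
  -- squares
  have sqa : a * a = 1 := by
    have h := hone _ (Set.mem_union_left _ ⟨0, rfl⟩); rw [map_mul] at h; exact h
  have sqb : b * b = 1 := by
    have h := hone _ (Set.mem_union_left _ ⟨1, rfl⟩); rw [map_mul] at h; exact h
  have sqd : d * d = 1 := by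
    have h := hone _ (Set.mem_union_left _ ⟨3, rfl⟩); rw [map_mul] at h; exact h
  have sqe : e * e = 1 := by
    have h := hone _ (Set.mem_union_left _ ⟨4, rfl⟩); rw [map_mul] at h; exact h
  -- commutation relations
  have cab : a * b = b * a := by
    open scoped commutatorElement in
    have h := hone ⁅FreeGroup.of (0 : Fin 6), FreeGroup.of 1⁆
      (Set.mem_union_right _ (by simp))
    rw [map_commutatorElement] at h
    exact commutatorElement_eq_one_iff_mul_comm.mp h
  have cad : a * d = d * a := by
    open scoped commutatorElement in
    have h := hone ⁅FreeGroup.of (0 : Fin 6), FreeGroup.of 3⁆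
      (Set.mem_union_right _ (by simp))
    rw [map_commutatorElement] at h
    exact commutatorElement_eq_one_iff_mul_comm.mp h
  have cbe : b * e = e * b := by
    open scoped commutatorElement in
    have h := hone ⁅FreeGroup.of (1 : Fin 6), FreeGroup.of 4⁆
      (Set.mem_union_right _ (by simp))
    rw [map_commutatorElement] at h
    exact commutatorElement_eq_one_iff_mul_comm.mp h
  have cde : d * e = e * d := by
    open scoped commutatorElement in
    have h := hone ⁅FreeGroup.of (3 : Fin 6), FreeGroup.of 4⁆
      (Set.mem_union_right _ (by simp))
    rw [map_commutatorElement] at h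
    exact commutatorElement_eq_one_iff_mul_comm.mp h
  have ccf : c * f = f * c := by
    open scoped commutatorElement in
    have h := hone ⁅FreeGroup.of (2 : Fin 6), FreeGroup.of 5⁆
      (Set.mem_union_right _ (by simp))
    rw [map_commutatorElement] at h
    exact commutatorElement_eq_one_iff_mul_comm.mp h
  -- row relations
  have r1 : a * b * c = 1 := by
    have h := hone (FreeGroup.of (0 : Fin 6) * FreeGroup.of 1 * FreeGroup.of 2)
      (Set.mem_union_right _ (by simp))
    rw [map_mul, map_mul] at h; exact h
  have r2 : d * e * f = 1 := by
    have h := hone (FreeGroup.of (3 : Fin 6) * FreeGroup.of 4 * FreeGroup.of 5)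
      (Set.mem_union_right _ (by simp))
    rw [map_mul, map_mul] at h; exact h
  -- inverses of involutions
  have ia : a⁻¹ = a := inv_eq_of_mul_eq_one_right sqa
  have ib : b⁻¹ = b := inv_eq_of_mul_eq_one_right sqb
  have id' : d⁻¹ = d := inv_eq_of_mul_eq_one_right sqd
  have ie : e⁻¹ = e := inv_eq_of_mul_eq_one_right sqe
  -- c = b*a and f = e*d
  have hc : c = b * a := by
    have h1 : (a * b)⁻¹ = c := inv_eq_of_mul_eq_one_right r1
    rw [← h1, mul_inv_rev, ia, ib]
  have hf : f = e * d := by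
    have h1 : (d * e)⁻¹ = f := inv_eq_of_mul_eq_one_right r2
    rw [← h1, mul_inv_rev, id', ie]
  -- x-forms (right-associated rewriting lemmas)
  have sqax : ∀ x : PresentedGroup relsH32, a * (a * x) = x := fun x => by
    rw [← mul_assoc, sqa, one_mul]
  have sqbx : ∀ x : PresentedGroup relsH32, b * (b * x) = x := fun x => by
    rw [← mul_assoc, sqb, one_mul]
  have sqdx : ∀ x : PresentedGroup relsH32, d * (d * x) = x := fun x => by
    rw [← mul_assoc, sqd, one_mul]
  have sqex : ∀ x : PresentedGroup relsH32, e * (e * x) = x := fun x => by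
    rw [← mul_assoc, sqe, one_mul]
  have cbax : ∀ x : PresentedGroup relsH32, b * (a * x) = a * (b * x) := fun x => by
    rw [← mul_assoc, ← cab, mul_assoc]
  have cdax : ∀ x : PresentedGroup relsH32, d * (a * x) = a * (d * x) := fun x => by
    rw [← mul_assoc, ← cad, mul_assoc]
  have cbex : ∀ x : PresentedGroup relsH32, b * (e * x) = e * (b * x) := fun x => by
    rw [← mul_assoc, cbe, mul_assoc]
  have cdex : ∀ x : PresentedGroup relsH32, d * (e * x) = e * (d * x) := fun x => by
    rw [← mul_assoc, cde, mul_assoc]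
  have hcx : ∀ x : PresentedGroup relsH32, c * x = b * (a * x) := fun x => by
    rw [hc, mul_assoc]
  have hfx : ∀ x : PresentedGroup relsH32, f * x = e * (d * x) := fun x => by
    rw [hf, mul_assoc]
  -- the key relation coming from [c, f] = 1
  have R' : b * a * e * d = e * d * b * a := by
    rw [mul_assoc (b*a) e d, mul_assoc (e*d) b a, ← hc, ← hf]; exact ccf
  have Rx : ∀ x : PresentedGroup relsH32,
      b * (a * (e * (d * x))) = e * (d * (b * (a * x))) := fun x => by
    simp only [← mul_assoc]; rw [R']
  have E1 : ∀ z : PresentedGroup relsH32,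
      b * (e * (d * z)) = a * (e * (d * (b * (a * z)))) := fun z => by
    rw [← Rx, ← cbax, sqax]
  have P1x : ∀ x : PresentedGroup relsH32,
      b * (d * (b * x)) = a * (e * (a * (e * (d * x)))) := fun x => by
    rw [← sqex (b*x), cdex, E1, ← cbex, ← cbax, sqbx, cdax, cdex]
  have E2 : ∀ y : PresentedGroup relsH32,
      b * (a * (e * (a * (d * y)))) = e * (d * (b * y)) := fun y => by
    have h := Rx (a * y); rw [sqax, cdax] at h; exact h
  have E3 : ∀ y : PresentedGroup relsH32,
      a * (e * (a * (d * y))) = b * (e * (d * (b * y))) := fun y => by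
    rw [← E2 y, sqbx]
  have P2x : ∀ y : PresentedGroup relsH32,
      b * (d * (b * y)) = e * (a * (e * (a * (d * y)))) := fun y => by
    rw [E3, ← cbex, sqex]
  have hSx : ∀ t : PresentedGroup relsH32,
      a * (e * (a * (e * t))) = e * (a * (e * (a * t))) := fun t => by
    have h1 := P1x (d * t); have h2 := P2x (d * t)
    rw [sqdx] at h1 h2
    exact h1.symm.trans h2
  -- the central word equals a*e*a*e
  have Wx : ∀ x : PresentedGroup relsH32, W * x = a * (e * (a * (e * x))) := fun x => by
    rw [hW_def]
    simp only [mul_assoc]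
    rw [hfx, hcx, cbex, sqbx, cdex, cdax, cdex, sqdx]
  -- commutation of W with each generator
  have caX : ∀ x : PresentedGroup relsH32, a * (W * x) = W * (a * x) := fun x => by
    rw [Wx, Wx, sqax, hSx, sqax]
  have ceX : ∀ x : PresentedGroup relsH32, e * (W * x) = W * (e * x) := fun x => by
    rw [Wx, Wx, sqex, ← hSx, sqex]
  have cbX : ∀ x : PresentedGroup relsH32, b * (W * x) = W * (b * x) := fun x => by
    rw [Wx, Wx, cbax, cbex, cbax, cbex]
  have cdX : ∀ x : PresentedGroup relsH32, d * (W * x) = W * (d * x) := fun x => by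
    rw [Wx, Wx, cdax, cdex, cdax, cdex]
  have ccX : ∀ x : PresentedGroup relsH32, c * (W * x) = W * (c * x) := fun x => by
    rw [hcx, caX, cbX, hcx]
  have cfX : ∀ x : PresentedGroup relsH32, f * (W * x) = W * (f * x) := fun x => by
    rw [hfx, cdX, ceX, hfx]
  -- pair forms
  have pairOf : ∀ u : PresentedGroup relsH32,
      (∀ x, u * (W * x) = W * (u * x)) → W * u = u * W := fun u h => by
    have h1 := h 1; rw [mul_one, mul_one] at h1; exact h1.symm
  -- conclude via the centralizer subgroup
  have hg : g ∈ Subgroup.centralizer {W} := by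
    apply PresentedGroup.generated_by
    intro j
    rw [Subgroup.mem_centralizer_iff]
    intro h hh
    rw [Set.mem_singleton_iff] at hh
    subst hh
    fin_cases j
    · exact pairOf a caX
    · exact pairOf b cbX
    · exact pairOf c ccX
    · exact pairOf d cdX
    · exact pairOf e ceX
    · exact pairOf f cfX
  exact (Subgroup.mem_centralizer_iff.mp hg W rfl).symm
end

section
/- Let Γ(W_n) be the graph incidence group of the wheel graph W_n (generators x_{e_i}, x_{f_i} for i ∈ ℤ/n with relations: all generators involutions, edges incident to a common vertex commute, x_{f_i} x_{e_{i−1}} x_{e_i} = 1 for all i, and x_{f_0} ⋯ x_{f_{n−1}} = 1). Then Γ(W_n) is isomorphic to (ℤ/2)ⁿ. -/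
open scoped commutatorElement

/-- Relations of the graph incidence group of the wheel `W_n` (outer edges
`(false, i)`, spokes `(true, i)`). -/
def wheelRels (n : ℕ) : Set (FreeGroup (Bool × ZMod n)) :=
  {r | ∃ p : Bool × ZMod n, r = FreeGroup.of p * FreeGroup.of p} ∪
  {r | ∃ i j : ZMod n, r = ⁅FreeGroup.of (true, i), FreeGroup.of (true, j)⁆} ∪
  {r | ∃ i : ZMod n, r = ⁅FreeGroup.of (false, i - 1), FreeGroup.of (false, i)⁆} ∪
  {r | ∃ i : ZMod n, r = ⁅FreeGroup.of (false, i - 1), FreeGroup.of (true, i)⁆} ∪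
  {r | ∃ i : ZMod n, r = ⁅FreeGroup.of (false, i), FreeGroup.of (true, i)⁆} ∪
  {r | ∃ i : ZMod n,
      r = FreeGroup.of (true, i) * FreeGroup.of (false, i - 1) * FreeGroup.of (false, i)} ∪
  { ((List.range n).map (fun i => FreeGroup.of (true, (i : ZMod n)))).prod }

namespace WheelAux

variable {n : ℕ} [NeZero n]

/-- Outer edge generators. -/
def e (i : ZMod n) : PresentedGroup (wheelRels n) := PresentedGroup.of (false, i)

/-- Spoke generators. -/
def f (i : ZMod n) : PresentedGroup (wheelRels n) := PresentedGroup.of (true, i)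

lemma rel_one {r : FreeGroup (Bool × ZMod n)} (hr : r ∈ wheelRels n) :
    PresentedGroup.mk (wheelRels n) r = 1 :=
  (QuotientGroup.eq_one_iff r).2 (Subgroup.subset_normalClosure hr)

lemma mk_of (p : Bool × ZMod n) :
    PresentedGroup.mk (wheelRels n) (FreeGroup.of p) = PresentedGroup.of p := rfl

lemma gen_sq (p : Bool × ZMod n) :
    (PresentedGroup.of p : PresentedGroup (wheelRels n)) * PresentedGroup.of p = 1 := by
  have h := rel_one (show FreeGroup.of p * FreeGroup.of p ∈ wheelRels n from
    Or.inl (Or.inl (Or.inl (Or.inl (Or.inl (Or.inl ⟨p, rfl⟩))))))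
  rwa [map_mul, mk_of] at h

lemma e_sq (i : ZMod n) : e i * e i = 1 := gen_sq _
lemma f_sq (i : ZMod n) : f i * f i = 1 := gen_sq _

lemma comm_of_rel {p q : Bool × ZMod n}
    (hr : ⁅FreeGroup.of p, FreeGroup.of q⁆ ∈ wheelRels n) :
    Commute (PresentedGroup.of p : PresentedGroup (wheelRels n)) (PresentedGroup.of q) := by
  have h := rel_one hr
  rw [map_commutatorElement] at h
  exact commutatorElement_eq_one_iff_commute.mp h

lemma ff_comm (i j : ZMod n) : Commute (f i) (f j) :=
  comm_of_rel (Or.inl (Or.inl (Or.inl (Or.inl (Or.inl (Or.inr ⟨i, j, rfl⟩))))))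

lemma ee_adj (i : ZMod n) : Commute (e (i - 1)) (e i) :=
  comm_of_rel (Or.inl (Or.inl (Or.inl (Or.inl (Or.inr ⟨i, rfl⟩)))))

lemma ef_comm1 (i : ZMod n) : Commute (e (i - 1)) (f i) :=
  comm_of_rel (Or.inl (Or.inl (Or.inl (Or.inr ⟨i, rfl⟩))))

lemma ef_comm2 (i : ZMod n) : Commute (e i) (f i) :=
  comm_of_rel (Or.inl (Or.inl (Or.inr ⟨i, rfl⟩)))

lemma fee (i : ZMod n) : f i * e (i - 1) * e i = 1 := by
  have h := rel_one (show FreeGroup.of (true, i) * FreeGroup.of (false, i - 1) *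
      FreeGroup.of (false, i) ∈ wheelRels n from Or.inl (Or.inr ⟨i, rfl⟩))
  rwa [map_mul, map_mul, mk_of, mk_of, mk_of] at h

lemma e_inv (i : ZMod n) : (e i)⁻¹ = e i := inv_eq_of_mul_eq_one_right (e_sq i)
lemma f_inv (i : ZMod n) : (f i)⁻¹ = f i := inv_eq_of_mul_eq_one_right (f_sq i)

lemma e_step (i : ZMod n) : e i = e (i - 1) * f i := by
  have h2 : (e i)⁻¹ = f i * e (i - 1) := inv_eq_of_mul_eq_one_left (fee i)
  rw [e_inv] at h2
  rw [h2]
  exact ((ef_comm1 i).eq).symm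

lemma f_eq (i : ZMod n) : f i = e (i - 1) * e i := by
  have h : f i * (e (i - 1) * e i) = 1 := by rw [← mul_assoc]; exact fee i
  have h2 : (f i)⁻¹ = e (i - 1) * e i := inv_eq_of_mul_eq_one_right h
  rwa [f_inv] at h2

/-- The spoke with index `k mod n`. -/
def F (k : ℕ) : PresentedGroup (wheelRels n) := f ((k : ZMod n))

/-- Partial products of spokes. -/
def Pf (k : ℕ) : PresentedGroup (wheelRels n) := ((List.range (k + 1)).map F).prod

lemma comm_with_Pf {g : PresentedGroup (wheelRels n)}
    (hg : ∀ j : ZMod n, Commute g (f j)) (k : ℕ) : Commute g (Pf k) := by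
  apply Commute.list_prod_right
  rintro x hx
  rw [List.mem_map] at hx
  obtain ⟨m, -, rfl⟩ := hx
  exact hg _

lemma Pf_comm_f (k : ℕ) (j : ZMod n) : Commute (Pf (n := n) k) (f j) := by
  apply Commute.list_prod_left
  rintro x hx
  rw [List.mem_map] at hx
  obtain ⟨m, -, rfl⟩ := hx
  exact ff_comm _ _

lemma key (k : ℕ) :
    Commute (e (-1 : ZMod n)) (F k) ∧ e ((k : ZMod n)) = e (-1 : ZMod n) * Pf k := by
  induction k with
  | zero =>
    constructor
    · have h := ef_comm1 (0 : ZMod n)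
      rw [zero_sub] at h
      simpa [F] using h
    · have h := e_step (0 : ZMod n)
      rw [zero_sub] at h
      simpa [Pf, List.range_succ, F] using h
  | succ k ih =>
    have hc1 : (((k + 1 : ℕ) : ZMod n) - 1) = (k : ZMod n) := by push_cast; ring
    have hstep : e (((k + 1 : ℕ) : ZMod n)) = e ((k : ZMod n)) * F (k + 1) := by
      have h := e_step (((k + 1 : ℕ) : ZMod n))
      rw [hc1] at h
      exact h
    have hPf : Pf (n := n) (k + 1) = Pf k * F (k + 1) := by
      simp [Pf, List.range_succ, mul_assoc]
    have hEk : e ((k : ZMod n)) = e (-1 : ZMod n) * Pf k := ih.2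
    have hq : Commute (Pf (n := n) k) (F (k + 1)) := Pf_comm_f k _
    have hc : Commute (e (-1 : ZMod n) * Pf k) (F (k + 1)) := by
      rw [← hEk]
      have h := ef_comm1 (((k + 1 : ℕ) : ZMod n))
      rw [hc1] at h
      exact h
    have hcomm : Commute (e (-1 : ZMod n)) (F (k + 1)) := by
      have hmain : e (-1 : ZMod n) * F (k + 1) * Pf k = F (k + 1) * e (-1 : ZMod n) * Pf k := by
        calc e (-1 : ZMod n) * F (k + 1) * Pf k
            = e (-1 : ZMod n) * (F (k + 1) * Pf k) := by rw [mul_assoc]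
          _ = e (-1 : ZMod n) * (Pf k * F (k + 1)) := by rw [hq.eq]
          _ = e (-1 : ZMod n) * Pf k * F (k + 1) := by rw [mul_assoc]
          _ = F (k + 1) * (e (-1 : ZMod n) * Pf k) := hc.eq
          _ = F (k + 1) * e (-1 : ZMod n) * Pf k := by rw [mul_assoc]
      exact mul_right_cancel hmain
    exact ⟨hcomm, by rw [hstep, hEk, hPf, mul_assoc]⟩

lemma t_comm_f (j : ZMod n) : Commute (e (-1 : ZMod n)) (f j) := by
  have h := (key (n := n) j.val).1
  rwa [show F (n := n) j.val = f j from by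
    simp only [F]; rw [ZMod.natCast_rightInverse j]] at h

lemma e_eq (j : ZMod n) : e j = e (-1 : ZMod n) * Pf j.val := by
  have h := (key (n := n) j.val).2
  rwa [show ((j.val : ℕ) : ZMod n) = j from ZMod.natCast_rightInverse j] at h

lemma ee_comm (a b : ZMod n) : Commute (e a) (e b) := by
  rw [e_eq a, e_eq b]
  have hPP : Commute (Pf (n := n) a.val) (Pf (n := n) b.val) :=
    comm_with_Pf (fun j => Pf_comm_f _ j) _
  exact Commute.mul_left
    (Commute.mul_right (Commute.refl _) (comm_with_Pf t_comm_f b.val))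
    (Commute.mul_right (comm_with_Pf t_comm_f a.val).symm hPP)

/-- Indicator function of `i : ZMod n` as a vector in `(ℤ/2)^n`. -/
def δ (i : ZMod n) : Fin n → ZMod 2 := fun j => if ((j : ℕ) : ZMod n) = i then 1 else 0

lemma addself (a : Fin n → ZMod 2) : a + a = 0 := by
  funext j
  have h : ∀ y : ZMod 2, y + y = 0 := by decide
  exact h _

lemma Msq (x : Multiplicative (Fin n → ZMod 2)) : x * x = 1 := by
  have : x * x = Multiplicative.ofAdd (x.toAdd + x.toAdd) := rfl
  rw [this, addself, ofAdd_zero]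

/-- The map on generators defining `φ`. -/
def Ff : Bool × ZMod n → Multiplicative (Fin n → ZMod 2) :=
  fun p => Multiplicative.ofAdd (if p.1 then δ (p.2 - 1) + δ p.2 else δ p.2)

lemma sum_list_range {M : Type*} [AddCommMonoid M] (h : ℕ → M) (m : ℕ) :
    ((List.range m).map h).sum = ∑ i ∈ Finset.range m, h i := by
  induction m with
  | zero => simp
  | succ m ih => rw [List.range_succ, Finset.sum_range_succ, List.map_append]; simp [ih]

lemma ofAdd_list_prod {A : Type*} [AddCommMonoid A] (l : List ℕ) (h : ℕ → A) :
    (l.map (fun i => Multiplicative.ofAdd (h i))).prod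
      = Multiplicative.ofAdd ((l.map h).sum) := by
  induction l with
  | nil => simp
  | cons a l ih => simp [ih, ofAdd_add]

lemma sum_range_cast {A : Type*} [AddCommMonoid A] (g : ZMod n → A) :
    ∑ i ∈ Finset.range n, g ((i : ZMod n)) = ∑ x : ZMod n, g x := by
  apply Finset.sum_nbij' (i := fun a => ((a : ℕ) : ZMod n)) (j := fun x => x.val)
  · intro a _; exact Finset.mem_univ _
  · intro x _; exact Finset.mem_range.mpr (ZMod.val_lt x)
  · intro a ha; exact ZMod.val_cast_of_lt (Finset.mem_range.mp ha)
  · intro x _; exact ZMod.natCast_rightInverse x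
  · intro a _; rfl

lemma hrels : ∀ r ∈ wheelRels n, FreeGroup.lift (Ff (n := n)) r = 1 := by
  rintro r (((((((⟨p, rfl⟩ | ⟨i, j, rfl⟩) | ⟨i, rfl⟩) | ⟨i, rfl⟩) | ⟨i, rfl⟩) | ⟨i, rfl⟩) | hr))
  · rw [map_mul, FreeGroup.lift_apply_of]; exact Msq _
  · rw [map_commutatorElement]
    exact commutatorElement_eq_one_iff_commute.mpr (Commute.all _ _)
  · rw [map_commutatorElement]
    exact commutatorElement_eq_one_iff_commute.mpr (Commute.all _ _)
  · rw [map_commutatorElement]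
    exact commutatorElement_eq_one_iff_commute.mpr (Commute.all _ _)
  · rw [map_commutatorElement]
    exact commutatorElement_eq_one_iff_commute.mpr (Commute.all _ _)
  · rw [map_mul, map_mul, FreeGroup.lift_apply_of, FreeGroup.lift_apply_of, FreeGroup.lift_apply_of]
    show Multiplicative.ofAdd _ * Multiplicative.ofAdd _ * Multiplicative.ofAdd _ = 1
    rw [← ofAdd_add, ← ofAdd_add]
    simp only [if_pos, if_neg, Bool.false_eq_true, if_false, if_true]
    rw [show (δ (i - 1) + δ i + δ (i - 1) + δ i : Fin n → ZMod 2) = 0 from by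
      funext j
      have h : ∀ a b : ZMod 2, a + b + a + b = 0 := by decide
      exact h _ _]
    exact ofAdd_zero
  · rw [Set.mem_singleton_iff] at hr
    subst hr
    rw [map_list_prod]
    simp only [bind_pure_comp, List.map_eq_map, List.map_map]
    have hthis : (List.map (fun i : ℕ =>
        Multiplicative.ofAdd (δ ((i : ZMod n) - 1) + δ ((i : ZMod n)))) (List.range n)).prod
        = 1 := by
      rw [ofAdd_list_prod, sum_list_range, Finset.sum_add_distrib,
        sum_range_cast (fun x => δ (x - 1)), sum_range_cast (fun x => δ x),
        show ∑ x : ZMod n, δ (x - 1) = ∑ x : ZMod n, δ (n := n) x from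
          Fintype.sum_equiv (Equiv.subRight (1 : ZMod n)) _ _ (fun x => rfl),
        addself, ofAdd_zero]
    have hcongr : (List.map (⇑(FreeGroup.lift (Ff (n := n))) ∘
          (fun i : ZMod n => FreeGroup.of (true, i)) ∘ (Nat.cast : ℕ → ZMod n))
          (List.range n)).prod
        = (List.map (fun i : ℕ =>
            Multiplicative.ofAdd (δ ((i : ZMod n) - 1) + δ ((i : ZMod n))))
          (List.range n)).prod := by
      refine congrArg List.prod (List.map_congr_left fun i _ => ?_)
      simp [Ff, Function.comp]
    exact hcongr.trans hthis

/-- The homomorphism `Γ(W_n) → (ℤ/2)^n`. -/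
def φ : PresentedGroup (wheelRels n) →* Multiplicative (Fin n → ZMod 2) :=
  PresentedGroup.toGroup hrels

lemma φ_of (p : Bool × ZMod n) : φ (PresentedGroup.of p) = Ff p :=
  PresentedGroup.toGroup.of hrels

/-- Per-coordinate homomorphism `ℤ/2 → Γ` sending `1` to `e_j`. -/
def ϕj (j : Fin n) : Multiplicative (ZMod 2) →* PresentedGroup (wheelRels n) :=
  MonoidHom.mk' (fun x => if x.toAdd = 1 then e (((j : ℕ) : ZMod n)) else 1) (by
    intro x y
    have hcase : ∀ a : ZMod 2, a = 0 ∨ a = 1 := by decide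
    have hxy : (x * y).toAdd = x.toAdd + y.toAdd := rfl
    rcases hcase x.toAdd with h1 | h1 <;> rcases hcase y.toAdd with h2 | h2 <;>
      simp [hxy, h1, h2] <;>
      first
        | rfl
        | exact (e_sq _).symm)

lemma hcomm : Pairwise fun i j : Fin n =>
    ∀ x y, Commute (ϕj (n := n) i x) (ϕj (n := n) j y) := by
  intro i j _ x y
  show Commute (if x.toAdd = 1 then e (((i : ℕ) : ZMod n)) else 1)
    (if y.toAdd = 1 then e (((j : ℕ) : ZMod n)) else 1)
  split_ifs <;> first
    | exact ee_comm _ _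
    | exact Commute.one_right _
    | exact Commute.one_left _

/-- The homomorphism from the direct product. -/
def ψ' : (∀ _ : Fin n, Multiplicative (ZMod 2)) →* PresentedGroup (wheelRels n) :=
  MonoidHom.noncommPiCoprod ϕj hcomm

/-- The equivalence between `Multiplicative (Fin n → ZMod 2)` and the direct product. -/
def E' : Multiplicative (Fin n → ZMod 2) ≃* ∀ _ : Fin n, Multiplicative (ZMod 2) :=
  MulEquiv.piMultiplicative fun _ => ZMod 2

/-- The inverse homomorphism `(ℤ/2)^n → Γ(W_n)`. -/
def ψ : Multiplicative (Fin n → ZMod 2) →* PresentedGroup (wheelRels n) :=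
  ψ'.comp (E' (n := n)).toMonoidHom

lemma castFin_inj {k j : Fin n} (h : ((k : ℕ) : ZMod n) = ((j : ℕ) : ZMod n)) : k = j := by
  apply Fin.ext
  have hk := ZMod.val_cast_of_lt (n := n) k.isLt
  have hj := ZMod.val_cast_of_lt (n := n) j.isLt
  rw [← hk, ← hj, h]

lemma single_eq (i : ZMod n) :
    (fun j : Fin n => Multiplicative.ofAdd (δ i j))
      = Pi.mulSingle (⟨i.val, ZMod.val_lt i⟩ : Fin n) (Multiplicative.ofAdd (1 : ZMod 2)) := by
  funext j
  rw [Pi.mulSingle_apply]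
  by_cases h : ((j : ℕ) : ZMod n) = i
  · have hj : j = (⟨i.val, ZMod.val_lt i⟩ : Fin n) := by
      apply Fin.ext
      have := congrArg ZMod.val h
      rwa [ZMod.val_cast_of_lt j.isLt] at this
    simp [δ, h, hj]
  · have hj : j ≠ (⟨i.val, ZMod.val_lt i⟩ : Fin n) := by
      intro hj
      apply h
      rw [hj]
      exact ZMod.natCast_rightInverse i
    simp [δ, h, hj]

lemma ψ_delta (i : ZMod n) : ψ (Multiplicative.ofAdd (δ i)) = e i := by
  show ψ' ((E' (n := n)) (Multiplicative.ofAdd (δ i))) = e i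
  have hE : (E' (n := n)) (Multiplicative.ofAdd (δ i))
      = fun j : Fin n => Multiplicative.ofAdd (δ i j) := rfl
  rw [hE, single_eq i]
  rw [show ψ' (Pi.mulSingle (⟨i.val, ZMod.val_lt i⟩ : Fin n)
      (Multiplicative.ofAdd (1 : ZMod 2)))
    = ϕj (⟨i.val, ZMod.val_lt i⟩ : Fin n) (Multiplicative.ofAdd (1 : ZMod 2)) from
    MonoidHom.noncommPiCoprod_mulSingle _ _ _]
  have hpos : (if (Multiplicative.ofAdd (1 : ZMod 2)).toAdd = 1
      then e (((i.val : ℕ) : ZMod n)) else 1) = e (((i.val : ℕ) : ZMod n)) := if_pos rfl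
  show (if (Multiplicative.ofAdd (1 : ZMod 2)).toAdd = 1
    then e (((i.val : ℕ) : ZMod n)) else 1) = e i
  rw [hpos, ZMod.natCast_rightInverse i]

lemma hleft : (ψ (n := n)).comp (φ (n := n)) = MonoidHom.id _ := by
  apply PresentedGroup.ext
  rintro ⟨b, i⟩
  rw [MonoidHom.comp_apply, φ_of, MonoidHom.id_apply]
  cases b
  · show ψ (Multiplicative.ofAdd (δ i)) = _
    rw [ψ_delta]; rfl
  · show ψ (Multiplicative.ofAdd (δ (i - 1) + δ i)) = _
    rw [ofAdd_add, map_mul, ψ_delta, ψ_delta, ← f_eq]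
    rfl

lemma hB : (φ (n := n)).comp (ψ' (n := n)) = (E' (n := n)).symm.toMonoidHom := by
  apply MonoidHom.functions_ext
  intro j x
  have hcase : ∀ a : ZMod 2, a = 0 ∨ a = 1 := by decide
  rcases hcase x.toAdd with h1 | h1
  · have hx : x = 1 := by
      have : x = Multiplicative.ofAdd x.toAdd := rfl
      rw [this, h1, ofAdd_zero]
    rw [hx, Pi.mulSingle_one, map_one, map_one]
  · rw [MonoidHom.comp_apply,
      show ψ' (Pi.mulSingle j x) = ϕj j x from MonoidHom.noncommPiCoprod_mulSingle _ _ _]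
    have hϕ : ϕj (n := n) j x = e (((j : ℕ) : ZMod n)) := by
      show (if x.toAdd = 1 then e (((j : ℕ) : ZMod n)) else 1) = _
      rw [if_pos h1]
    rw [hϕ]
    have hf : φ (e (((j : ℕ) : ZMod n)))
        = Multiplicative.ofAdd (δ (((j : ℕ) : ZMod n))) := by
      rw [show e (((j : ℕ) : ZMod n))
          = PresentedGroup.of (false, ((j : ℕ) : ZMod n)) from rfl, φ_of]
      simp [Ff]
    rw [hf]
    show Multiplicative.ofAdd (δ (((j : ℕ) : ZMod n)))
      = (E' (n := n)).symm (Pi.mulSingle j x)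
    have hsymm : (E' (n := n)).symm (Pi.mulSingle j x)
        = Multiplicative.ofAdd (fun k : Fin n =>
            Multiplicative.toAdd
              ((Pi.mulSingle j x : ∀ _ : Fin n, Multiplicative (ZMod 2)) k)) := rfl
    rw [hsymm]
    congr 1
    funext k
    rw [Pi.mulSingle_apply]
    by_cases hk : k = j
    · subst hk
      simp [δ, h1]
    · have hne : ¬ ((k : ℕ) : ZMod n) = ((j : ℕ) : ZMod n) := fun h => hk (castFin_inj h)
      simp [δ, hne, hk]

lemma hright : (φ (n := n)).comp (ψ (n := n)) = MonoidHom.id _ := by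
  apply MonoidHom.ext
  intro x
  have h := DFunLike.congr_fun (hB (n := n)) ((E' (n := n)) x)
  rw [MonoidHom.comp_apply] at h
  rw [MonoidHom.comp_apply, MonoidHom.id_apply]
  show φ (ψ' ((E' (n := n)) x)) = x
  rw [h]
  exact (E' (n := n)).symm_apply_apply x

end WheelAux

/-- `Γ(W_n) ≅ (ℤ/2)ⁿ`. -/
theorem stmt_12 (n : ℕ) (hn : 1 ≤ n) :
    Nonempty (PresentedGroup (wheelRels n) ≃* Multiplicative (Fin n → ZMod 2)) := by
  haveI : NeZero n := ⟨Nat.one_le_iff_ne_zero.mp hn⟩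
  exact ⟨MonoidHom.toMulEquiv WheelAux.φ WheelAux.ψ WheelAux.hleft WheelAux.hright⟩
end
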